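/- For all arithmetic functions u, v with values in ℚ: D·(u∗v) = (D·u)∗(N·v) + (N·u)∗(D·v), where D is the arithmetic derivative (extended to ℚ-valued), N(n) = n, ∗ is Dirichlet convolution, and · is pointwise product. -/

import Mathlib

/-- Dirichlet convolution of two `ℚ`-valued arithmetic functions. -/
def dconv (u v : ℕ → ℚ) : ℕ → ℚ :=
  fun n => ∑ x ∈ n.divisorsAntidiagonal, u x.1 * v x.2

def CompletelyMultiplicative (h : ℕ → ℚ) : Prop :=
  h 1 = 1 ∧ ∀ m n : ℕ, 0 < m → 0 < n → h (m * n) = h m * h n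

def CompletelyAdditive (g : ℕ → ℚ) : Prop :=
  ∀ m n : ℕ, 0 < m → 0 < n → g (m * n) = g m + g n

def LeibnizAdditive (f h : ℕ → ℚ) : Prop :=
  CompletelyMultiplicative h ∧
  ∀ m n : ℕ, 0 < m → 0 < n → f (m * n) = f m * h n + f n * h m

/-- The identity already holds summand by summand: `f (a * b) * u a * v b` splits by the rule. -/
theorem mul_dconv_of_leibniz {f h : ℕ → ℚ}
    (hf : ∀ m n : ℕ, 0 < m → 0 < n → f (m * n) = f m * h n + f n * h m)
    (u v : ℕ → ℚ) (n : ℕ) :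
    f n * dconv u v n =
      dconv (fun k => f k * u k) (fun k => h k * v k) n +
      dconv (fun k => h k * u k) (fun k => f k * v k) n := by
  simp only [dconv, Finset.mul_sum, ← Finset.sum_add_distrib]
  refine Finset.sum_congr rfl fun x hx => ?_
  obtain ⟨rfl, hn⟩ := Nat.mem_divisorsAntidiagonal.mp hx
  rw [hf x.1 x.2 (Nat.pos_of_ne_zero (left_ne_zero_of_mul hn))
    (Nat.pos_of_ne_zero (right_ne_zero_of_mul hn))]
  ring

theorem stmt_18_general (D : ℕ → ℕ)
    (hL : ∀ m n : ℕ, 0 < m → 0 < n → D (m * n) = m * D n + D m * n) :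
    ∀ u v : ℕ → ℚ, ∀ n : ℕ,
      (D n : ℚ) * dconv u v n =
        dconv (fun k => (D k : ℚ) * u k) (fun k => (k : ℚ) * v k) n +
        dconv (fun k => (k : ℚ) * u k) (fun k => (D k : ℚ) * v k) n :=
  mul_dconv_of_leibniz fun m n hm hn => by
    rw [hL m n hm hn]
    push_cast
    ring

theorem stmt_18 (D : ℕ → ℕ) (h1 : D 1 = 0)
    (hp : ∀ p : ℕ, p.Prime → D p = 1)
    (hL : ∀ m n : ℕ, 0 < m → 0 < n → D (m * n) = m * D n + D m * n) :
    ∀ u v : ℕ → ℚ, ∀ n : ℕ,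
      (D n : ℚ) * dconv u v n =
        dconv (fun k => (D k : ℚ) * u k) (fun k => (k : ℚ) * v k) n +
        dconv (fun k => (k : ℚ) * u k) (fun k => (D k : ℚ) * v k) n :=
  stmt_18_general D hL
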